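/- arXiv:hep-th/0512028 — 5 statements merged into one kernel-verified Lean document; each statement's English description precedes it below -/
import Mathlib

section
/- Let n ≥ 1 be an integer, let l₀, l₁, …, lₙ be nonnegative integers with L := l₀ + l₁ + ⋯ + lₙ < n, and let y₁, …, yₙ be admissible real numbers. Then Φₙ(l₀,…,lₙ; y₁,…,yₙ) = 0. -/
/-!
Put `x k = S(1, k)`, so that `S(r + 1, m) = x m - x r` and admissibility says that the
nodes `x 0, …, x n` are distinct. The `m`-th term of `Φₙ` is then
`(-1)ⁿ P(x m) / ∏_{r ≠ m} (x m - x r)` with `P(X) = ∏ r, (x r - X) ^ l r`, so `(-1)ⁿ Φₙ` is the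
divided difference of `P` on the `n + 1` nodes, i.e. the coefficient of `Xⁿ` in `P`. It
vanishes because `deg P ≤ L < n`.
-/

/-- `S y a b = y_a + y_{a+1} + ⋯ + y_b`. -/
noncomputable def S (y : ℕ → ℝ) (a b : ℕ) : ℝ := ∑ t ∈ Finset.Icc a b, y t

/-- `(y₁, …, yₙ)` is admissible if `S(a,b) ≠ 0` for all `1 ≤ a ≤ b ≤ n`. -/
def Admissible (n : ℕ) (y : ℕ → ℝ) : Prop :=
  ∀ a b : ℕ, 1 ≤ a → a ≤ b → b ≤ n → S y a b ≠ 0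

/-- `Φₙ(l₀,…,lₙ; y₁,…,yₙ)`, the pointwise ε→0 value of the distributional sum of
Lemma 1 of the paper. -/
noncomputable def Phi (n : ℕ) (l : ℕ → ℕ) (y : ℕ → ℝ) : ℝ :=
  ∑ m ∈ Finset.range (n + 1),
    (-1 : ℝ) ^ m *
      (∏ r ∈ Finset.range m, (-S y (r + 1) m) ^ l r / S y (r + 1) m) *
      (if l m = 0 then 1 else 0) *
      (∏ r ∈ Finset.Icc (m + 1) n, (S y (m + 1) r) ^ l r / S y (m + 1) r)

open Finset Polynomial

theorem Lagrange.sum_eval_div_prod_sub_eq_zero {F ι : Type*} [Field F] [DecidableEq ι]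
    {s : Finset ι} {v : ι → F} (hvs : Set.InjOn v s) {P : F[X]} (hP : P.degree < ↑(#s - 1)) :
    ∑ i ∈ s, P.eval (v i) / ∏ j ∈ s.erase i, (v i - v j) = 0 := by
  rw [← Lagrange.coeff_eq_sum hvs (hP.trans_le (by exact_mod_cast Nat.sub_le _ _)),
    coeff_eq_zero_of_degree_lt hP]

theorem natDegree_prod_C_sub_X_pow_le {R ι : Type*} [CommRing R] (s : Finset ι) (x : ι → R)
    (k : ι → ℕ) : (∏ i ∈ s, (C (x i) - X) ^ k i).natDegree ≤ ∑ i ∈ s, k i := by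
  refine (natDegree_prod_le _ _).trans (sum_le_sum fun i _ => natDegree_pow_le.trans ?_)
  exact mul_le_of_le_one_right (Nat.zero_le _)
    ((natDegree_sub_le _ _).trans (max_le (by simp) natDegree_X_le))

theorem Finset.prod_range_succ_erase {M : Type*} [CommMonoid M] (f : ℕ → M) {m n : ℕ}
    (hm : m ≤ n) :
    ∏ r ∈ (range (n + 1)).erase m, f r = (∏ r ∈ range m, f r) * ∏ r ∈ Icc (m + 1) n, f r := by
  have hsplit : (range (n + 1)).erase m = range m ∪ Icc (m + 1) n := by
    ext r
    simp only [mem_erase, mem_union, mem_range, mem_Icc]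
    omega
  rw [hsplit, prod_union (disjoint_left.2 fun r hr hr' => by simp at hr hr'; omega)]

theorem S_succ_eq_sub (y : ℕ → ℝ) {r m : ℕ} (h : r ≤ m) :
    S y (r + 1) m = S y 1 m - S y 1 r := by
  rw [S, S, S, Icc_add_one_left_eq_Ioc, ← zero_add (1 : ℕ), Icc_add_one_left_eq_Ioc,
    Icc_add_one_left_eq_Ioc, eq_sub_iff_add_eq, add_comm, sum_Ioc_consecutive _ (Nat.zero_le r) h]

theorem Admissible.injOn {n : ℕ} {y : ℕ → ℝ} (hy : Admissible n y) :
    Set.InjOn (S y 1) (range (n + 1)) := by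
  have hne : ∀ r m, r < m → m ≤ n → S y 1 r ≠ S y 1 m := fun r m hrm hm h =>
    hy (r + 1) m (Nat.le_add_left 1 r) hrm hm (by rw [S_succ_eq_sub y hrm.le, h, sub_self])
  intro a ha b hb hab
  simp only [coe_range, Set.mem_Iio] at ha hb
  rcases lt_trichotomy a b with h | h | h
  exacts [absurd hab (hne a b h (by omega)), h, absurd hab.symm (hne b a h (by omega))]

theorem summand_eq_div_prod_sub {K : Type*} [Field K] (x : ℕ → K) (l : ℕ → ℕ) {m n : ℕ}
    (hm : m ≤ n) :
    (-1) ^ m * (∏ r ∈ range m, (x r - x m) ^ l r / (x m - x r)) * (if l m = 0 then 1 else 0) *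
        ∏ r ∈ Icc (m + 1) n, (x r - x m) ^ l r / (x r - x m) =
      (-1) ^ n * ((∏ r ∈ range (n + 1), (x r - x m) ^ l r) /
        ∏ r ∈ (range (n + 1)).erase m, (x m - x r)) := by
  have hsign : ∏ r ∈ Icc (m + 1) n, (x r - x m) ^ l r / (x r - x m) =
      (-1) ^ (n - m) * ∏ r ∈ Icc (m + 1) n, (x r - x m) ^ l r / (x m - x r) := by
    rw [show n - m = #(Icc (m + 1) n) by simp, ← prod_neg]
    exact prod_congr rfl fun r _ => by rw [← div_neg, neg_sub]
  -- `[l_m = 0] = (x m - x m) ^ l m` is the missing `r = m` factor of the numerator.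
  rw [← mul_prod_erase _ _ (mem_range.2 (Nat.lt_add_one_of_le hm)), sub_self, ← zero_pow_eq,
    mul_div_assoc, ← prod_div_distrib, prod_range_succ_erase _ hm, hsign,
    ← Nat.add_sub_cancel' hm, pow_add, Nat.add_sub_cancel_left]
  ring

theorem Phi_eq_sum_div_prod_sub (n : ℕ) (l : ℕ → ℕ) (y : ℕ → ℝ) :
    Phi n l y = (-1) ^ n * ∑ m ∈ range (n + 1),
      (∏ r ∈ range (n + 1), (S y 1 r - S y 1 m) ^ l r) /
        ∏ r ∈ (range (n + 1)).erase m, (S y 1 m - S y 1 r) := by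
  rw [Phi, mul_sum]
  refine sum_congr rfl fun m hm => ?_
  have hmn := mem_range_succ_iff.1 hm
  have hleft : ∏ r ∈ range m, (-S y (r + 1) m) ^ l r / S y (r + 1) m =
      ∏ r ∈ range m, (S y 1 r - S y 1 m) ^ l r / (S y 1 m - S y 1 r) :=
    prod_congr rfl fun r hr => by rw [S_succ_eq_sub y (mem_range.1 hr).le, neg_sub]
  have hright : ∏ r ∈ Icc (m + 1) n, S y (m + 1) r ^ l r / S y (m + 1) r =
      ∏ r ∈ Icc (m + 1) n, (S y 1 r - S y 1 m) ^ l r / (S y 1 r - S y 1 m) :=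
    prod_congr rfl fun r hr => by rw [S_succ_eq_sub y (Nat.le_of_succ_le (mem_Icc.1 hr).1)]
  rw [hleft, hright, summand_eq_div_prod_sub _ l hmn]

theorem Phi_eq_zero_of_sum_lt_general (n : ℕ) (l : ℕ → ℕ) (y : ℕ → ℝ)
    (hL : ∑ r ∈ Finset.range (n + 1), l r < n)
    (hy : Admissible n y) :
    Phi n l y = 0 := by
  set P : ℝ[X] := ∏ r ∈ range (n + 1), (C (S y 1 r) - X) ^ l r
  have hP : P.degree < ↑(#(range (n + 1)) - 1) := by
    refine degree_le_natDegree.trans_lt (WithBot.coe_lt_coe.2 ?_)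
    rw [card_range, Nat.add_sub_cancel]
    exact (natDegree_prod_C_sub_X_pow_le _ _ _).trans_lt hL
  have hvanish := Lagrange.sum_eval_div_prod_sub_eq_zero hy.injOn hP
  simp only [P, eval_prod, eval_pow, eval_sub, eval_C, eval_X] at hvanish
  rw [Phi_eq_sum_div_prod_sub, hvanish, mul_zero]

/-- if `L = l₀ + ⋯ + lₙ < n` then `Φₙ(l₀,…,lₙ; y₁,…,yₙ) = 0` for
every admissible tuple `(y₁,…,yₙ)`. -/
theorem Phi_eq_zero_of_sum_lt (n : ℕ) (hn : 1 ≤ n) (l : ℕ → ℕ) (y : ℕ → ℝ)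
    (hL : ∑ r ∈ Finset.range (n + 1), l r < n)
    (hy : Admissible n y) :
    Phi n l y = 0 :=
  Phi_eq_zero_of_sum_lt_general n l y hL hy
end

section
/- Let n ≥ 1 be an integer and let l₀, l₁, …, lₙ be nonnegative integers with L := l₀ + l₁ + ⋯ + lₙ > n. Then there exists a multivariate polynomial P in n variables Y₁, …, Yₙ with real coefficients, homogeneous of degree L − n, such that for every admissible tuple (y₁,…,yₙ) of real numbers one has Φₙ(l₀,…,lₙ; y₁,…,yₙ) = P(y₁,…,yₙ). -/
/-!
Put `x_r = -(y₁ + ⋯ + y_r)` for `0 ≤ r ≤ n`. The sign `(-1)^m` cancels against the `m` factors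
with `r < m`, and the indicator `[l_m = 0]` is `(x_m - x_m)^{l_m}`, so
`Φₙ = ∑_m G(x_m) / ∏_{r ≠ m} (x_m - x_r)` with `G = ∏_r (X - x_r)^{l_r}`: this is the divided
difference of `G` at the nodes `x_0, …, x_n`. Admissibility says exactly that the nodes are
distinct, and then by Lagrange interpolation the divided difference is the coefficient of `X^n` in
`G mod ∏_r (X - x_r)`, a polynomial in the `y`'s. Scaling `y` by `t` scales `Φₙ` by `t^{L-n}`,
so `Φₙ` agrees with the homogeneous component of degree `L - n` of that polynomial.
-/

open Finset Polynomial

namespace Lagrange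

section NodalPow

variable {R ι : Type*} [CommRing R] {s : Finset ι} {v : ι → R} {l : ι → ℕ}

noncomputable def nodalPow (s : Finset ι) (v : ι → R) (l : ι → ℕ) : R[X] :=
  ∏ i ∈ s, (X - C (v i)) ^ l i

theorem eval_nodalPow (x : R) : (nodalPow s v l).eval x = ∏ i ∈ s, (x - v i) ^ l i := by
  simp [nodalPow, eval_prod]

theorem nodal_eq_nodalPow_one : nodal s v = nodalPow s v 1 := by
  simp [nodal_eq, nodalPow]

theorem map_nodalPow {S : Type*} [CommRing S] (f : R →+* S) :
    (nodalPow s v l).map f = nodalPow s (f ∘ v) l := by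
  simp [nodalPow, Polynomial.map_prod]

theorem nodalPow_congr {w : ι → R} (h : Set.EqOn v w s) : nodalPow s v l = nodalPow s w l :=
  prod_congr rfl fun i hi => by rw [h hi]

theorem eval_nodalPow_smul (t x : R) :
    (nodalPow s (t • v) l).eval (t * x) = t ^ (∑ i ∈ s, l i) * (nodalPow s v l).eval x := by
  simp only [eval_nodalPow, Pi.smul_apply, smul_eq_mul, ← mul_sub, mul_pow, prod_mul_distrib,
    prod_pow_eq_pow_sum]

end NodalPow

section DividedDifference

variable {F ι : Type*} [Field F] [DecidableEq ι] {s : Finset ι} {v : ι → F}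

def dividedDifference (s : Finset ι) (v : ι → F) (f : F[X]) : F :=
  ∑ i ∈ s, f.eval (v i) * nodalWeight s v i

theorem dividedDifference_eq_coeff_modByMonic (hvs : Set.InjOn v s) (f : F[X]) :
    dividedDifference s v f = (f %ₘ nodal s v).coeff (#s - 1) := by
  have hdeg : (f %ₘ nodal s v).degree < #s :=
    degree_nodal (s := s) (v := v) ▸ degree_modByMonic_lt f nodal_monic
  rw [coeff_eq_sum hvs hdeg, dividedDifference]
  refine sum_congr rfl fun i hi => ?_
  have heval : (f %ₘ nodal s v).eval (v i) = f.eval (v i) := by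
    conv_rhs => rw [← modByMonic_add_div f (nodal s v)]
    rw [eval_add, eval_mul, eval_nodal_at_node hi, zero_mul, add_zero]
  rw [heval, nodalWeight, prod_inv_distrib, div_eq_mul_inv]

theorem nodalWeight_smul {i : ι} (hi : i ∈ s) (t : F) :
    nodalWeight s (t • v) i = (t ^ (#s - 1))⁻¹ * nodalWeight s v i := by
  simp only [nodalWeight, Pi.smul_apply, smul_eq_mul, ← mul_sub, mul_inv, prod_mul_distrib,
    prod_const, card_erase_of_mem hi, inv_pow]

theorem dividedDifference_smul_nodalPow (t : F) (l : ι → ℕ) :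
    dividedDifference s (t • v) (nodalPow s (t • v) l) =
      t ^ (∑ i ∈ s, l i) * (t ^ (#s - 1))⁻¹ * dividedDifference s v (nodalPow s v l) := by
  rw [dividedDifference, dividedDifference, mul_sum]
  refine sum_congr rfl fun i hi => ?_
  rw [Pi.smul_apply, smul_eq_mul, eval_nodalPow_smul, nodalWeight_smul hi]
  ring

end DividedDifference

end Lagrange

namespace MvPolynomial

variable {σ R : Type*} [CommSemiring R]

theorem IsHomogeneous.eval_smul {p : MvPolynomial σ R} {d : ℕ} (hp : p.IsHomogeneous d)
    (t : R) (x : σ → R) : eval (t • x) p = t ^ d * eval x p := by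
  rw [p.as_sum, map_sum, map_sum, Finset.mul_sum]
  refine sum_congr rfl fun c hc => ?_
  have hdeg : (c.prod fun _ e => t ^ e) = t ^ d := by
    rw [← hp (mem_support_iff.mp hc), Finsupp.weight_apply, Finsupp.prod, Finsupp.sum,
      prod_pow_eq_pow_sum]
    simp
  simp only [eval_monomial, Pi.smul_apply, smul_eq_mul, mul_pow, Finsupp.prod_mul, hdeg]
  ring

theorem eval_homogeneousComponent_of_eval_smul {R : Type*} [CommRing R] [IsDomain R] [Infinite R]
    {p : MvPolynomial σ R} {x : σ → R} {d : ℕ}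
    (h : ∀ t ≠ 0, eval (t • x) p = t ^ d * eval x p) :
    eval x (homogeneousComponent d p) = eval x p := by
  set q : R[X] := ∑ k ∈ range (p.totalDegree + 1),
    Polynomial.C (eval x (homogeneousComponent k p)) * Polynomial.X ^ k
  have hq_eval (t : R) : q.eval t = eval (t • x) p := by
    conv_rhs => rw [← sum_homogeneousComponent p]
    simp only [q, eval_finsetSum, Polynomial.eval_mul, Polynomial.eval_C, Polynomial.eval_pow,
      Polynomial.eval_X, map_sum, (homogeneousComponent_isHomogeneous _ _).eval_smul, mul_comm]
  have hq_coeff : q.coeff d = eval x (homogeneousComponent d p) := by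
    simp only [q, finsetSum_coeff, coeff_C_mul_X_pow, sum_ite_eq, mem_range]
    split_ifs with hd
    · rfl
    · rw [homogeneousComponent_eq_zero _ _ (by omega), map_zero]
  have hq : q = Polynomial.C (eval x p) * Polynomial.X ^ d := by
    refine eq_of_infinite_eval_eq _ _ ((Set.finite_singleton 0).infinite_compl.mono ?_)
    intro t ht
    rw [Set.mem_ofPred_eq, hq_eval, h t ht, Polynomial.eval_mul, Polynomial.eval_C,
      Polynomial.eval_pow, Polynomial.eval_X, mul_comm]
  rw [← hq_coeff, hq, coeff_C_mul_X_pow, if_pos rfl]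

end MvPolynomial

open Lagrange

theorem S_smul (t : ℝ) (y : ℕ → ℝ) (a b : ℕ) : S (t • y) a b = t * S y a b := by
  simp [S, mul_sum]

theorem S_add_one_left_eq_sub {y : ℕ → ℝ} {r m : ℕ} (h : r ≤ m) :
    S y (r + 1) m = S y 1 m - S y 1 r := by
  rw [eq_sub_iff_add_eq', S, S, S, Icc_add_one_left_eq_Ioc, ← zero_add 1,
    Icc_add_one_left_eq_Ioc, Icc_add_one_left_eq_Ioc, sum_Ioc_consecutive _ (Nat.zero_le r) h]

-- No admissibility is needed: both sides send a vanishing `S` through the same `x / 0 = 0`.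
theorem Phi_eq_dividedDifference (n : ℕ) (l : ℕ → ℕ) (y : ℕ → ℝ) :
    Phi n l y = dividedDifference (range (n + 1)) (fun r => -S y 1 r)
      (nodalPow (range (n + 1)) (fun r => -S y 1 r) l) := by
  rw [Phi, dividedDifference]
  refine sum_congr rfl fun m hm => ?_
  obtain ⟨a, ha⟩ : ∃ a : ℕ → ℝ, ∀ r, a r = S y 1 r - S y 1 m := ⟨_, fun _ => rfl⟩
  have hrhs : (nodalPow (range (n + 1)) (fun r => -S y 1 r) l).eval (-S y 1 m) *
      nodalWeight (range (n + 1)) (fun r => -S y 1 r) m =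
      (if l m = 0 then 1 else 0) * ∏ r ∈ (range (n + 1)).erase m, a r ^ l r / a r := by
    have hnodes (r : ℕ) : -S y 1 m - -S y 1 r = a r := by rw [ha, neg_sub_neg]
    rw [eval_nodalPow, nodalWeight, ← mul_prod_erase _ _ hm]
    simp only [hnodes, ha m, sub_self, zero_pow_eq, div_eq_mul_inv, prod_mul_distrib]
    ring
  have hsplit : (range (n + 1)).erase m = range m ∪ Icc (m + 1) n := by
    ext r
    simp only [mem_erase, mem_range, mem_union, mem_Icc]
    grind
  have hdisj : Disjoint (range m) (Icc (m + 1) n) := by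
    simp only [disjoint_left, mem_range, mem_Icc]
    omega
  have hlow : ∏ r ∈ range m, (-S y (r + 1) m) ^ l r / S y (r + 1) m =
      (-1) ^ m * ∏ r ∈ range m, a r ^ l r / a r := by
    rw [← card_range m, ← prod_const, card_range, ← prod_mul_distrib]
    refine prod_congr rfl fun r hr => ?_
    rw [S_add_one_left_eq_sub (mem_range.mp hr).le, show S y 1 m - S y 1 r = -a r by
      rw [ha, neg_sub], neg_neg, div_neg, neg_one_mul]
  have hhigh : ∏ r ∈ Icc (m + 1) n, S y (m + 1) r ^ l r / S y (m + 1) r =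
      ∏ r ∈ Icc (m + 1) n, a r ^ l r / a r :=
    prod_congr rfl fun r hr => by rw [S_add_one_left_eq_sub (by grind), ha]
  have hsq : ((-1 : ℝ) ^ m) * (-1) ^ m = 1 := by rw [← mul_pow]; norm_num
  rw [hrhs, hsplit, prod_union hdisj, hlow, hhigh]
  linear_combination ((if l m = 0 then 1 else 0) * (∏ r ∈ range m, a r ^ l r / a r) *
    ∏ r ∈ Icc (m + 1) n, a r ^ l r / a r) * hsq

theorem Phi_smul {n : ℕ} {l : ℕ → ℕ} (hL : n ≤ ∑ r ∈ range (n + 1), l r) (y : ℕ → ℝ) {t : ℝ}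
    (ht : t ≠ 0) : Phi n l (t • y) = t ^ (∑ r ∈ range (n + 1), l r - n) * Phi n l y := by
  have hnodes : (fun r => -S (t • y) 1 r) = t • fun r => -S y 1 r := by
    ext r
    simp [S_smul]
  rw [Phi_eq_dividedDifference, Phi_eq_dividedDifference, hnodes, dividedDifference_smul_nodalPow,
    card_range, Nat.add_sub_cancel, pow_sub₀ t ht hL]

theorem Admissible.smul {n : ℕ} {y : ℕ → ℝ} (hy : Admissible n y) {t : ℝ} (ht : t ≠ 0) :
    Admissible n (t • y) := fun a b ha hab hb => by
  rw [S_smul]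
  exact mul_ne_zero ht (hy a b ha hab hb)

theorem Admissible.injOn_neg_S {n : ℕ} {y : ℕ → ℝ} (hy : Admissible n y) :
    Set.InjOn (fun r => -S y 1 r) (range (n + 1)) := by
  have hne {r m : ℕ} (hrm : r < m) (hm : m ≤ n) : S y 1 r ≠ S y 1 m := fun h =>
    hy (r + 1) m (Nat.le_add_left 1 r) hrm hm (by rw [S_add_one_left_eq_sub hrm.le, h, sub_self])
  intro r hr m hm h
  simp only [coe_range, Set.mem_Iio, neg_inj] at hr hm h
  rcases lt_trichotomy r m with hrm | rfl | hmr
  · exact absurd h (hne hrm (by omega))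
  · rfl
  · exact absurd h.symm (hne hmr (by omega))

noncomputable def partialSumForm (n r : ℕ) : MvPolynomial (Fin n) ℝ :=
  ∑ i : Fin n with i.val < r, MvPolynomial.X i

theorem eval_partialSumForm {n r : ℕ} (hr : r ≤ n) (y : ℕ → ℝ) :
    MvPolynomial.eval (fun i : Fin n => y (i.val + 1)) (partialSumForm n r) = S y 1 r := by
  rw [partialSumForm, map_sum, sum_filter]
  simp only [MvPolynomial.eval_X]
  rw [Fin.sum_univ_eq_sum_range (fun i => if i < r then y (i + 1) else 0), ← sum_filter,
    range_eq_Ico, Ico_filter_lt, min_eq_right hr, S, ← Ico_add_one_right_eq_Icc, sum_Ico_add']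

noncomputable def phiPoly (n : ℕ) (l : ℕ → ℕ) : MvPolynomial (Fin n) ℝ :=
  (nodalPow (range (n + 1)) (fun r => -partialSumForm n r) l %ₘ
    nodal (range (n + 1)) (fun r => -partialSumForm n r)).coeff n

theorem Phi_eq_eval_phiPoly {n : ℕ} (l : ℕ → ℕ) {y : ℕ → ℝ} (hy : Admissible n y) :
    Phi n l y = MvPolynomial.eval (fun i : Fin n => y (i.val + 1)) (phiPoly n l) := by
  set φ := MvPolynomial.eval (fun i : Fin n => y (i.val + 1))
  have hnodes : Set.EqOn (φ ∘ fun r => -partialSumForm n r) (fun r => -S y 1 r) (range (n + 1)) :=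
    fun r hr => by
      simp [φ, eval_partialSumForm (Nat.lt_succ_iff.mp (mem_range.mp hr))]
  rw [Phi_eq_dividedDifference, dividedDifference_eq_coeff_modByMonic hy.injOn_neg_S, card_range,
    Nat.add_sub_cancel, phiPoly, ← coeff_map, map_modByMonic φ nodal_monic, nodal_eq_nodalPow_one,
    nodal_eq_nodalPow_one, map_nodalPow, map_nodalPow, nodalPow_congr hnodes, nodalPow_congr hnodes]

theorem Phi_eq_homogeneous_poly_of_sum_gt_general (n : ℕ) (l : ℕ → ℕ)
    (hL : n < ∑ r ∈ Finset.range (n + 1), l r) :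
    ∃ P : MvPolynomial (Fin n) ℝ,
      P.IsHomogeneous (∑ r ∈ Finset.range (n + 1), l r - n) ∧
      ∀ y : ℕ → ℝ, Admissible n y →
        Phi n l y = MvPolynomial.eval (fun i : Fin n => y (i.val + 1)) P := by
  refine ⟨MvPolynomial.homogeneousComponent _ (phiPoly n l),
    MvPolynomial.homogeneousComponent_isHomogeneous _ _, fun y hy => ?_⟩
  rw [MvPolynomial.eval_homogeneousComponent_of_eval_smul, Phi_eq_eval_phiPoly l hy]
  intro t ht
  rw [← Phi_eq_eval_phiPoly l hy, ← Phi_smul hL.le y ht]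
  exact (Phi_eq_eval_phiPoly l (hy.smul ht)).symm

/-- if `L = l₀ + ⋯ + lₙ > n`, then there is a real polynomial `P`
in `n` variables, homogeneous of degree `L − n`, with
`Φₙ(l₀,…,lₙ; y₁,…,yₙ) = P(y₁,…,yₙ)` for every admissible tuple. The variable
`Yᵢ` (for `i : Fin n`) is evaluated at `y (i+1)`. -/
theorem Phi_eq_homogeneous_poly_of_sum_gt (n : ℕ) (hn : 1 ≤ n) (l : ℕ → ℕ)
    (hL : n < ∑ r ∈ Finset.range (n + 1), l r) :
    ∃ P : MvPolynomial (Fin n) ℝ,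
      P.IsHomogeneous (∑ r ∈ Finset.range (n + 1), l r - n) ∧
      ∀ y : ℕ → ℝ, Admissible n y →
        Phi n l y = MvPolynomial.eval (fun i : Fin n => y (i.val + 1)) P :=
  Phi_eq_homogeneous_poly_of_sum_gt_general n l hL
end

section
/- Let l₁, l₂ be nonnegative integers with L := l₁ + l₂ > 2. Then there exists a polynomial P in two variables Y₁, Y₂ with real coefficients, homogeneous of degree L − 2, such that Φ₂(0, l₁, l₂; y₁, y₂) = P(y₁, y₂) for every admissible pair (y₁, y₂), and the coefficient of the monomial Y₁^{L−2} in P equals 1. -/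
/-!
With `l₀ = 0`, only the `m = 0` term of `Φ₂` survives when `l₁, l₂ ≥ 1`, and it equals
`y₁^(l₁-1) (y₁+y₂)^(l₂-1)`. If `l₁ = 0` (resp. `l₂ = 0`) the two surviving terms combine into
the divided difference `(u^(L-1) - v^(L-1)) / (u - v)` with `(u, v) = (y₁+y₂, y₂)`
(resp. `(y₁, -y₂)`), which is the geometric sum `∑ uⁱ v^(L-2-i)`. The coefficient of `Y₁^(L-2)`
in a homogeneous polynomial of degree `L - 2` is its value at `(1, 0)`, which is `1` in all
three cases.
-/

open Finset MvPolynomial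

namespace MvPolynomial.IsHomogeneous

variable {σ R : Type*} [CommSemiring R] {P : MvPolynomial σ R} {d : ℕ}

theorem coeff_single_eq_eval [DecidableEq σ] (hP : P.IsHomogeneous d) (i : σ) :
    coeff (Finsupp.single i d) P = eval (Pi.single i 1) P := by
  rw [eval_eq, sum_eq_single (Finsupp.single i d)]
  · rw [prod_eq_one fun j hj => ?_, mul_one]
    obtain rfl := mem_singleton.mp (Finsupp.support_single_subset hj)
    simp
  · intro m hm hne
    obtain ⟨j, hj, hji⟩ : ∃ j ∈ m.support, j ≠ i := by
      by_contra! h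
      have hm_single : m = Finsupp.single i (m i) :=
        Finsupp.support_subset_singleton.mp fun j hj => mem_singleton.mpr (h j hj)
      have hdeg : m.degree = d := by
        rw [Finsupp.degree_eq_weight_one]; exact hP (mem_support_iff.mp hm)
      rw [hm_single, Finsupp.degree_single] at hdeg
      exact hne (hdeg ▸ hm_single)
    rw [prod_eq_zero hj (by simp [hji, Finsupp.mem_support_iff.mp hj]), mul_zero]
  · intro h
    rw [notMem_support_iff.mp h, zero_mul]

theorem geom_sum₂ {u v : MvPolynomial σ R} {k : ℕ} (hu : u.IsHomogeneous k)
    (hv : v.IsHomogeneous k) (n : ℕ) :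
    (∑ i ∈ range n, u ^ i * v ^ (n - 1 - i)).IsHomogeneous (k * (n - 1)) := by
  refine IsHomogeneous.sum _ _ _ fun i hi => ?_
  convert (hu.pow i).mul (hv.pow (n - 1 - i)) using 1
  have := mem_range.mp hi
  rw [← mul_add]; congr 1; omega

end MvPolynomial.IsHomogeneous

theorem admissible_two_iff {y : ℕ → ℝ} :
    Admissible 2 y ↔ y 1 ≠ 0 ∧ y 2 ≠ 0 ∧ y 1 + y 2 ≠ 0 := by
  constructor
  · intro h
    exact ⟨by simpa [S] using h 1 1, by simpa [S] using h 2 2,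
      by simpa [S, sum_Icc_succ_top] using h 1 2⟩
  · rintro ⟨h1, h2, h12⟩ a b ha hab hb
    have ha2 := hab.trans hb
    interval_cases a <;> interval_cases b <;> simpa [S, sum_Icc_succ_top]

theorem Phi_two (l : ℕ → ℕ) (y : ℕ → ℝ) :
    Phi 2 l y =
      (if l 0 = 0 then y 1 ^ l 1 / y 1 * ((y 1 + y 2) ^ l 2 / (y 1 + y 2)) else 0)
        - (if l 1 = 0 then (-y 1) ^ l 0 / y 1 * (y 2 ^ l 2 / y 2) else 0)
        + (if l 2 = 0 then (-(y 1 + y 2)) ^ l 0 / (y 1 + y 2) * ((-y 2) ^ l 1 / y 2) else 0) := by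
  have h12 : (1 : ℕ) ≠ 2 := by norm_num
  simp only [Phi, S, sum_range_succ, prod_range_succ, sum_range_zero, prod_range_zero,
    show Icc 1 2 = {1, 2} from rfl, Icc_self, show Icc 3 2 = ∅ from rfl, sum_pair h12,
    prod_pair h12, sum_singleton, prod_singleton, prod_empty]
  split_ifs <;> ring

section

variable {y : ℕ → ℝ}

theorem Phi_two_zero_succ_succ (a b : ℕ) (h1 : y 1 ≠ 0) (h12 : y 1 + y 2 ≠ 0) :
    Phi 2 (fun r => if r = 1 then a + 1 else if r = 2 then b + 1 else 0) y =
      y 1 ^ a * (y 1 + y 2) ^ b := by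
  simp [Phi_two, pow_succ, h1, h12]

theorem Phi_two_zero_zero_succ (n : ℕ) (h1 : y 1 ≠ 0) (h2 : y 2 ≠ 0) (h12 : y 1 + y 2 ≠ 0) :
    Phi 2 (fun r => if r = 1 then 0 else if r = 2 then n + 1 else 0) y =
      ∑ i ∈ range n, (y 1 + y 2) ^ i * y 2 ^ (n - 1 - i) := by
  rw [geom₂_sum (by simpa using h1), Phi_two]
  simp [pow_succ, h2, h12]
  field_simp

theorem Phi_two_zero_succ_zero (n : ℕ) (h1 : y 1 ≠ 0) (h2 : y 2 ≠ 0) (h12 : y 1 + y 2 ≠ 0) :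
    Phi 2 (fun r => if r = 1 then n + 1 else if r = 2 then 0 else 0) y =
      ∑ i ∈ range n, y 1 ^ i * (-y 2) ^ (n - 1 - i) := by
  rw [geom₂_sum (by simpa [← sub_eq_zero] using h12), Phi_two]
  simp [pow_succ, h1]
  field_simp
  ring

end

/-- for `l₀ = 0` and `L = l₁ + l₂ > 2`, `Φ₂(0,l₁,l₂; y₁,y₂)` is
given on admissible pairs by a homogeneous polynomial `P` of degree `L − 2` in
two variables `Y₁, Y₂` (variable `0` evaluated at `y₁`, variable `1` at `y₂`),
and the coefficient of `Y₁^{L−2}` in `P` equals `1`. -/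
theorem Phi_two_poly_coeff_first (l₁ l₂ : ℕ) (hL : 2 < l₁ + l₂) :
    ∃ P : MvPolynomial (Fin 2) ℝ,
      P.IsHomogeneous (l₁ + l₂ - 2) ∧
      (∀ y : ℕ → ℝ, Admissible 2 y →
        Phi 2 (fun r => if r = 1 then l₁ else if r = 2 then l₂ else 0) y =
          MvPolynomial.eval (fun i : Fin 2 => y (i.val + 1)) P) ∧
      MvPolynomial.coeff (Finsupp.single (0 : Fin 2) (l₁ + l₂ - 2)) P = 1 := by
  suffices key : ∃ P : MvPolynomial (Fin 2) ℝ, P.IsHomogeneous (l₁ + l₂ - 2) ∧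
      (∀ y : ℕ → ℝ, Admissible 2 y →
        Phi 2 (fun r => if r = 1 then l₁ else if r = 2 then l₂ else 0) y =
          eval (fun i : Fin 2 => y (i.val + 1)) P) ∧
      eval (Pi.single 0 1) P = 1 by
    obtain ⟨P, hP, hPhi, hP1⟩ := key
    exact ⟨P, hP, hPhi, (hP.coeff_single_eq_eval 0).trans hP1⟩
  have hX0 := isHomogeneous_X ℝ (0 : Fin 2)
  have hX1 := isHomogeneous_X ℝ (1 : Fin 2)
  rcases l₁ with _ | a <;> rcases l₂ with _ | b
  · omega
  · refine ⟨∑ i ∈ range b, (X 0 + X 1) ^ i * X 1 ^ (b - 1 - i), ?_, fun y hy => ?_, ?_⟩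
    · convert (hX0.add hX1).geom_sum₂ hX1 b using 1; omega
    · obtain ⟨h1, h2, h12⟩ := admissible_two_iff.mp hy
      rw [Phi_two_zero_zero_succ b h1 h2 h12]
      simp
    · simpa [show b ≠ 0 by omega] using geom₂_sum (one_ne_zero' ℝ) b
  · refine ⟨∑ i ∈ range a, X 0 ^ i * (-X 1) ^ (a - 1 - i), ?_, fun y hy => ?_, ?_⟩
    · convert hX0.geom_sum₂ hX1.neg a using 1; omega
    · obtain ⟨h1, h2, h12⟩ := admissible_two_iff.mp hy
      rw [Phi_two_zero_succ_zero a h1 h2 h12]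
      simp
    · simpa [show a ≠ 0 by omega] using geom₂_sum (one_ne_zero' ℝ) a
  · refine ⟨X 0 ^ a * (X 0 + X 1) ^ b, ?_, fun y hy => ?_, by simp⟩
    · convert (hX0.pow a).mul ((hX0.add hX1).pow b) using 1; omega
    · obtain ⟨h1, -, h12⟩ := admissible_two_iff.mp hy
      rw [Phi_two_zero_succ_succ a b h1 h12]
      simp
end

section
/- Let c > 0, let F, H : ℝ → ℂ be infinitely differentiable functions, and let n be a nonnegative integer. Define Ψ : (−c, ∞) → ℂ by Ψ(s) = F(ω(s)) · H(−ω(s)) / (2 ω(s)), where ω(s) = √(c + s). Then Ψ is n times differentiable on (−c, ∞) and for every s ∈ (−c, ∞), writing ω = ω(s), (1/n!) · Ψ⁽ⁿ⁾(s) = ∑_{l₁ ≥ 0, l₂ ≥ 0, l₁+l₂ ≤ n} c_{n, l₁+l₂} · (−1)^{l₁} · binom(l₁+l₂, l₂) · F^{(l₁)}(ω) · H^{(l₂)}(−ω) / ω^{2n+1−l₁−l₂}, where c_{n,l} := ((−1)ⁿ / l!) · 2^{−(2n+1−l)} · binom(2n−l, n). -/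
/-- The constant `c_{n,l} = ((−1)ⁿ / l!) · 2^{−(2n+1−l)} · binom(2n−l, n)`. -/
noncomputable def cnl (n l : ℕ) : ℝ :=
  ((-1 : ℝ) ^ n / (Nat.factorial l)) * ((2 : ℝ) ^ (2 * n + 1 - l))⁻¹ *
    (Nat.choose (2 * n - l) n)

namespace DMSF

lemma keyNat0 (n : ℕ) : (n+1) * Nat.choose (2*n+2) (n+1) = 2*(2*n+1) * Nat.choose (2*n) n := by
  have h1 := Nat.add_one_mul_choose_eq (2*n+1) n
  -- (2n+2) * C(2n+1, n) = C(2n+2, n+1) * (n+1)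
  have h2 := Nat.choose_mul_succ_eq (2*n) n
  -- C(2n,n) * (2n+1) = C(2n+1, n) * (2n+1-n)
  have h3 : 2*n+1-n = n+1 := by omega
  rw [h3] at h2
  have key : (n+1) * ((n+1) * Nat.choose (2*n+2) (n+1)) = (n+1) * (2*(2*n+1) * Nat.choose (2*n) n) := by
    nlinarith [h1, h2]
  exact Nat.eq_of_mul_eq_mul_left (by omega) key

lemma keyNat1 (m k : ℕ) :
    (m+k+2) * Nat.choose (m+2*k+3) (m+k+2)
      = (m+1) * Nat.choose (m+2*k+2) (m+k+1) + 2*(m+2*k+2) * Nat.choose (m+2*k+1) (m+k+1) := by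
  have h1 := Nat.add_one_mul_choose_eq (m+2*k+2) (m+k+1)
  -- (m+2k+3) * C(m+2k+2, m+k+1) = C(m+2k+3, m+k+2) * (m+k+2)
  have h2 := Nat.choose_mul_succ_eq (m+2*k+1) (m+k+1)
  -- C(m+2k+1, m+k+1) * (m+2k+2) = C(m+2k+2, m+k+1) * (m+2k+2-(m+k+1))
  have h3 : m+2*k+1+1 = m+2*k+2 := by omega
  have h4 : m+2*k+1+1-(m+k+1) = k+1 := by omega
  rw [h3, h4] at h2
  nlinarith [h1, h2]

lemma L0 (n : ℕ) : -(2*(n:ℝ)+1) * cnl n 0 = 2*((n:ℝ)+1) * cnl (n+1) 0 := by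
  unfold cnl
  have e1 : 2*n+1-0 = 2*n+1 := by omega
  have e2 : 2*(n+1)+1-0 = 2*n+3 := by omega
  have e3 : 2*n-0 = 2*n := by omega
  have e4 : 2*(n+1)-0 = 2*n+2 := by omega
  rw [e1, e2, e3, e4]
  have hk := keyNat0 n
  have hk' : ((n:ℝ)+1) * Nat.choose (2*n+2) (n+1) = 2*(2*(n:ℝ)+1) * Nat.choose (2*n) n := by
    exact_mod_cast hk
  simp only [Nat.factorial_zero, pow_succ, pow_zero]
  push_cast
  field_simp
  linear_combination hk'

end DMSF

namespace DMSF

lemma L1 (n m : ℕ) (h : m + 1 ≤ n) :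
    -cnl n m - (2*(n:ℝ) - m) * cnl n (m+1) = 2*((n:ℝ)+1) * cnl (n+1) (m+1) := by
  obtain ⟨k, rfl⟩ : ∃ k, n = m + 1 + k := ⟨n - (m+1), by omega⟩
  unfold cnl
  rw [show 2*(m+1+k)+1-m = m+2*k+3 from by omega,
      show 2*(m+1+k)-m = m+2*k+2 from by omega,
      show 2*(m+1+k)+1-(m+1) = m+2*k+2 from by omega,
      show 2*(m+1+k)-(m+1) = m+2*k+1 from by omega,
      show 2*(m+1+k+1)+1-(m+1) = m+2*k+4 from by omega,
      show 2*(m+1+k+1)-(m+1) = m+2*k+3 from by omega,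
      show m+1+k+1 = m+k+2 from by omega]
  have hk : ((m:ℝ)+k+2) * Nat.choose (m+2*k+3) (m+k+2)
      = ((m:ℝ)+1) * Nat.choose (m+2*k+2) (m+k+1) + 2*((m:ℝ)+2*k+2) * Nat.choose (m+2*k+1) (m+k+1) := by
    exact_mod_cast keyNat1 m k
  rw [show m+1+k = m+k+1 from by omega]
  rw [Nat.factorial_succ]
  push_cast
  field_simp
  linear_combination ((-1:ℝ)^(m+k+1)*(2:ℝ)^(2*(m+2*k)+6)) * hk

lemma L2 (n : ℕ) : -cnl n n = 2*((n:ℝ)+1) * cnl (n+1) (n+1) := by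
  unfold cnl
  rw [show 2*n+1-n = n+1 from by omega, show 2*n-n = n from by omega,
      show 2*(n+1)+1-(n+1) = n+2 from by omega, show 2*(n+1)-(n+1) = n+1 from by omega,
      Nat.choose_self, Nat.choose_self, Nat.factorial_succ]
  push_cast
  field_simp
  ring

end DMSF

namespace DMSF

noncomputable def ee (n q1 q2 : ℕ) : ℝ :=
  if q1 + q2 ≤ n then cnl n (q1+q2) * (-1:ℝ)^q1 * ((q1+q2).choose q2) else 0

lemma coeff_rec (n q1 q2 : ℕ) :
    (if q1 = 0 then (0:ℝ) else ee n (q1-1) q2) - (if q2 = 0 then 0 else ee n q1 (q2-1))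
      - ((2*n+1-q1-q2 : ℕ) : ℝ) * ee n q1 q2 = 2*((n:ℝ)+1) * ee (n+1) q1 q2 := by
  rcases q1 with _ | a <;> rcases q2 with _ | b
  · -- q1 = 0, q2 = 0
    simp only [ee]
    rw [if_pos (by omega : 0+0 ≤ n), if_pos (by omega : 0+0 ≤ n+1)]
    rw [show (2*n+1-0-0 : ℕ) = 2*n+1 from by omega]
    simp only [zero_add, pow_zero, one_mul, Nat.choose_zero_right, Nat.cast_one, mul_one]
    push_cast
    linear_combination L0 n
  · -- q1 = 0, q2 = b+1
    rw [if_pos rfl, if_neg (Nat.succ_ne_zero b), Nat.add_sub_cancel]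
    by_cases hb : b + 1 ≤ n
    · simp only [ee]
      rw [if_pos (by omega : 0+b ≤ n), if_pos (by omega : 0+(b+1) ≤ n),
        if_pos (by omega : 0+(b+1) ≤ n+1)]
      rw [show (2*n+1-0-(b+1) : ℕ) = 2*n-b from by omega, Nat.cast_sub (by omega : b ≤ 2*n)]
      simp only [zero_add, pow_zero, one_mul, Nat.choose_self, Nat.cast_one, mul_one]
      push_cast
      linear_combination L1 n b hb
    · by_cases hb1 : b + 1 ≤ n + 1
      · have hbn : b = n := by omega
        subst hbn
        simp only [ee]
        rw [if_pos (by omega : 0+b ≤ b), if_neg (by omega : ¬ 0+(b+1) ≤ b),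
          if_pos (by omega : 0+(b+1) ≤ b+1)]
        simp only [zero_add, pow_zero, one_mul, Nat.choose_self, Nat.cast_one, mul_one]
        push_cast
        linear_combination L2 b
      · simp only [ee]
        rw [if_neg (by omega : ¬ 0+b ≤ n), if_neg (by omega : ¬ 0+(b+1) ≤ n),
          if_neg (by omega : ¬ 0+(b+1) ≤ n+1)]
        ring
  · -- q1 = a+1, q2 = 0
    rw [if_neg (Nat.succ_ne_zero a), if_pos rfl, Nat.add_sub_cancel]
    by_cases ha : a + 1 ≤ n
    · simp only [ee]
      rw [if_pos (by omega : a+0 ≤ n), if_pos (by omega : a+1+0 ≤ n),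
        if_pos (by omega : a+1+0 ≤ n+1)]
      rw [show (2*n+1-(a+1)-0 : ℕ) = 2*n-a from by omega, Nat.cast_sub (by omega : a ≤ 2*n)]
      simp only [Nat.add_zero, Nat.choose_zero_right, Nat.cast_one, mul_one]
      push_cast
      linear_combination ((-1:ℝ)^(a+1)) * L1 n a ha
    · by_cases ha1 : a + 1 ≤ n + 1
      · have han : a = n := by omega
        subst han
        simp only [ee]
        rw [if_pos (by omega : a+0 ≤ a), if_neg (by omega : ¬ a+1+0 ≤ a),
          if_pos (by omega : a+1+0 ≤ a+1)]
        simp only [Nat.add_zero, Nat.choose_zero_right, Nat.cast_one, mul_one]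
        push_cast
        linear_combination ((-1:ℝ)^(a+1)) * L2 a
      · simp only [ee]
        rw [if_neg (by omega : ¬ a+0 ≤ n), if_neg (by omega : ¬ a+1+0 ≤ n),
          if_neg (by omega : ¬ a+1+0 ≤ n+1)]
        ring
  · -- q1 = a+1, q2 = b+1
    rw [if_neg (Nat.succ_ne_zero a), if_neg (Nat.succ_ne_zero b), Nat.add_sub_cancel,
      Nat.add_sub_cancel]
    have hP : ((a+b+2).choose (b+1) : ℝ) = ((a+b+1).choose b : ℝ) + ((a+b+1).choose (b+1) : ℝ) := by
      exact_mod_cast congrArg (Nat.cast (R := ℝ)) (Nat.choose_succ_succ (a+b+1) b)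
    by_cases hl : a + b + 2 ≤ n
    · simp only [ee]
      rw [if_pos (by omega : a+(b+1) ≤ n), if_pos (by omega : a+1+b ≤ n),
        if_pos (by omega : a+1+(b+1) ≤ n), if_pos (by omega : a+1+(b+1) ≤ n+1)]
      rw [show (2*n+1-(a+1)-(b+1) : ℕ) = 2*n-(a+b+1) from by omega,
        Nat.cast_sub (by omega : a+b+1 ≤ 2*n)]
      rw [show a+(b+1) = a+b+1 from by omega, show a+1+b = a+b+1 from by omega,
        show a+1+(b+1) = a+b+2 from by omega]
      have hL1 := L1 n (a+b+1) (by omega)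
      push_cast at hL1 ⊢
      linear_combination ((-1:ℝ)^(a+1) * ((a+b+2).choose (b+1) : ℝ)) * hL1
        + ((-1:ℝ)^(a+1) * cnl n (a+b+1)) * hP
    · by_cases hl1 : a + b + 2 ≤ n + 1
      · have hbn : a + b + 1 = n := by omega
        subst hbn
        simp only [ee]
        rw [if_pos (by omega : a+(b+1) ≤ a+b+1), if_pos (by omega : a+1+b ≤ a+b+1),
          if_neg (by omega : ¬ a+1+(b+1) ≤ a+b+1), if_pos (by omega : a+1+(b+1) ≤ a+b+1+1)]
        rw [show a+(b+1) = a+b+1 from by omega, show a+1+b = a+b+1 from by omega,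
          show a+1+(b+1) = a+b+2 from by omega, show a+b+1+1 = a+b+2 from by omega]
        have hL2 : -cnl (a+b+1) (a+b+1) = 2*(((a:ℝ)+b+1)+1) * cnl (a+b+2) (a+b+2) := by
          have := L2 (a+b+1); push_cast at this ⊢; convert this using 2 <;> norm_num
        push_cast
        linear_combination ((-1:ℝ)^(a+1) * ((a+b+2).choose (b+1) : ℝ)) * hL2
          + ((-1:ℝ)^(a+1) * cnl (a+b+1) (a+b+1)) * hP
      · simp only [ee]
        rw [if_neg (by omega : ¬ a+(b+1) ≤ n), if_neg (by omega : ¬ a+1+b ≤ n),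
          if_neg (by omega : ¬ a+1+(b+1) ≤ n), if_neg (by omega : ¬ a+1+(b+1) ≤ n+1)]
        ring

end DMSF

namespace DMSF

lemma ee_top_right (n i : ℕ) : ee n i (n+1) = 0 := if_neg (by omega)
lemma ee_top_left (n j : ℕ) : ee n (n+1) j = 0 := if_neg (by omega)

lemma sum_rec (n : ℕ) (c' : ℕ → ℕ → ℂ) :
    (∑ q1 ∈ Finset.range (n+1), ∑ q2 ∈ Finset.range (n+1),
      ((ee n q1 q2 : ℝ) : ℂ) * (2⁻¹ * (c' (q1+1) q2 - c' q1 (q2+1)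
          - ((2*n+1-q1-q2 : ℕ) : ℂ) * c' q1 q2)))
    = ((n:ℂ)+1) * ∑ q1 ∈ Finset.range (n+2), ∑ q2 ∈ Finset.range (n+2),
        ((ee (n+1) q1 q2 : ℝ) : ℂ) * c' q1 q2 := by
  have hA : (∑ q1 ∈ Finset.range (n+2), ∑ q2 ∈ Finset.range (n+2),
      2⁻¹ * (((if q1 = 0 then (0:ℝ) else ee n (q1-1) q2) : ℝ) : ℂ) * c' q1 q2)
      = ∑ q1 ∈ Finset.range (n+1), ∑ q2 ∈ Finset.range (n+1),
        2⁻¹ * ((ee n q1 q2 : ℝ) : ℂ) * c' (q1+1) q2 := by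
    rw [Finset.sum_range_succ']
    simp only [if_pos rfl, Complex.ofReal_zero, mul_zero, zero_mul, Finset.sum_const_zero,
      add_zero, Nat.succ_ne_zero, if_false, Nat.add_sub_cancel, if_true]
    refine Finset.sum_congr rfl fun i _ => ?_
    rw [Finset.sum_range_succ]
    simp [ee_top_right]
  have hB : (∑ q1 ∈ Finset.range (n+2), ∑ q2 ∈ Finset.range (n+2),
      2⁻¹ * (((if q2 = 0 then (0:ℝ) else ee n q1 (q2-1)) : ℝ) : ℂ) * c' q1 q2)
      = ∑ q1 ∈ Finset.range (n+1), ∑ q2 ∈ Finset.range (n+1),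
        2⁻¹ * ((ee n q1 q2 : ℝ) : ℂ) * c' q1 (q2+1) := by
    rw [Finset.sum_range_succ]
    have h0 : (∑ q2 ∈ Finset.range (n+2),
        2⁻¹ * (((if q2 = 0 then (0:ℝ) else ee n (n+1) (q2-1)) : ℝ) : ℂ) * c' (n+1) q2) = 0 := by
      refine Finset.sum_eq_zero fun q2 _ => ?_
      rcases q2 with _ | j
      · simp
      · simp [ee_top_left]
    rw [h0, add_zero]
    refine Finset.sum_congr rfl fun q1 _ => ?_
    rw [Finset.sum_range_succ']
    simp only [if_pos rfl, Complex.ofReal_zero, mul_zero, zero_mul, add_zero,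
      Nat.succ_ne_zero, if_false, Nat.add_sub_cancel, if_true]
  have hC : (∑ q1 ∈ Finset.range (n+2), ∑ q2 ∈ Finset.range (n+2),
      2⁻¹ * ((2*n+1-q1-q2 : ℕ) : ℂ) * ((ee n q1 q2 : ℝ) : ℂ) * c' q1 q2)
      = ∑ q1 ∈ Finset.range (n+1), ∑ q2 ∈ Finset.range (n+1),
        2⁻¹ * ((2*n+1-q1-q2 : ℕ) : ℂ) * ((ee n q1 q2 : ℝ) : ℂ) * c' q1 q2 := by
    rw [Finset.sum_range_succ]
    have h0 : (∑ q2 ∈ Finset.range (n+2),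
        2⁻¹ * ((2*n+1-(n+1)-q2 : ℕ) : ℂ) * ((ee n (n+1) q2 : ℝ) : ℂ) * c' (n+1) q2) = 0 := by
      refine Finset.sum_eq_zero fun q2 _ => ?_
      simp [ee_top_left]
    rw [h0, add_zero]
    refine Finset.sum_congr rfl fun q1 _ => ?_
    rw [Finset.sum_range_succ]
    simp [ee_top_right]
  -- expand the left-hand side into three sums
  have expand : (∑ q1 ∈ Finset.range (n+1), ∑ q2 ∈ Finset.range (n+1),
      ((ee n q1 q2 : ℝ) : ℂ) * (2⁻¹ * (c' (q1+1) q2 - c' q1 (q2+1)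
          - ((2*n+1-q1-q2 : ℕ) : ℂ) * c' q1 q2)))
      = (∑ q1 ∈ Finset.range (n+1), ∑ q2 ∈ Finset.range (n+1),
          2⁻¹ * ((ee n q1 q2 : ℝ) : ℂ) * c' (q1+1) q2)
        - (∑ q1 ∈ Finset.range (n+1), ∑ q2 ∈ Finset.range (n+1),
          2⁻¹ * ((ee n q1 q2 : ℝ) : ℂ) * c' q1 (q2+1))
        - (∑ q1 ∈ Finset.range (n+1), ∑ q2 ∈ Finset.range (n+1),
          2⁻¹ * ((2*n+1-q1-q2 : ℕ) : ℂ) * ((ee n q1 q2 : ℝ) : ℂ) * c' q1 q2) := by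
    rw [← Finset.sum_sub_distrib, ← Finset.sum_sub_distrib]
    refine Finset.sum_congr rfl fun q1 _ => ?_
    rw [← Finset.sum_sub_distrib, ← Finset.sum_sub_distrib]
    refine Finset.sum_congr rfl fun q2 _ => ?_
    ring
  rw [expand, ← hA, ← hB, ← hC]
  rw [Finset.mul_sum]
  rw [← Finset.sum_sub_distrib, ← Finset.sum_sub_distrib]
  refine (Finset.sum_congr rfl fun q1 _ => ?_).symm
  rw [Finset.mul_sum, ← Finset.sum_sub_distrib, ← Finset.sum_sub_distrib]
  refine Finset.sum_congr rfl fun q2 _ => ?_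
  have h := coeff_rec n q1 q2
  have hh : (((if q1 = 0 then (0:ℝ) else ee n (q1-1) q2) : ℝ) : ℂ)
      - (((if q2 = 0 then (0:ℝ) else ee n q1 (q2-1)) : ℝ) : ℂ)
      - ((2*n+1-q1-q2 : ℕ) : ℂ) * ((ee n q1 q2 : ℝ) : ℂ)
      = 2*((n:ℂ)+1) * ((ee (n+1) q1 q2 : ℝ) : ℂ) := by
    exact_mod_cast congrArg (Complex.ofReal) h
  linear_combination (-2⁻¹ * c' q1 q2) * hh

end DMSF

namespace DMSF

open Real Complex Finset

variable {c : ℝ} {F H : ℝ → ℂ}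

/-- ω(s)ᵏ-denominator building block. -/
noncomputable def Bfun (c : ℝ) (F H : ℝ → ℂ) (n q1 q2 : ℕ) (s : ℝ) : ℂ :=
  iteratedDeriv q1 F (Real.sqrt (c+s)) * iteratedDeriv q2 H (-Real.sqrt (c+s)) /
    ((Real.sqrt (c+s) : ℂ)) ^ (2*n+1-q1-q2)

noncomputable def Sfun (c : ℝ) (F H : ℝ → ℂ) (n : ℕ) (s : ℝ) : ℂ :=
  ∑ q1 ∈ Finset.range (n+1), ∑ q2 ∈ Finset.range (n+1),
    ((ee n q1 q2 : ℝ) : ℂ) * Bfun c F H n q1 q2 s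

lemma sqrt_cs_pos {s : ℝ} (hc : 0 < c) (hs : s ∈ Set.Ioi (-c)) : 0 < Real.sqrt (c+s) :=
  Real.sqrt_pos.2 (by simpa using neg_lt_iff_pos_add'.1 hs)

lemma hasDerivAt_sqrt_cs {s : ℝ} (hc : 0 < c) (hs : s ∈ Set.Ioi (-c)) :
    HasDerivAt (fun t => Real.sqrt (c+t)) (1/(2*Real.sqrt (c+s))) s := by
  have h1 : HasDerivAt (fun t : ℝ => c + t) 1 s := (hasDerivAt_id s).const_add c
  have h2 : HasDerivAt Real.sqrt (1/(2*Real.sqrt (c+s))) (c+s) :=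
    Real.hasDerivAt_sqrt (by have := sqrt_cs_pos hc hs; nlinarith [Real.sqrt_pos.1 this])
  simpa [Function.comp_def] using h2.comp s h1

lemma hasDerivAt_B (hc : 0 < c) (hF : ContDiff ℝ (⊤ : ℕ∞) F) (hH : ContDiff ℝ (⊤ : ℕ∞) H)
    (n q1 q2 : ℕ) (h : q1 + q2 ≤ n) {s : ℝ} (hs : s ∈ Set.Ioi (-c)) :
    HasDerivAt (Bfun c F H n q1 q2)
      (2⁻¹ * (Bfun c F H (n+1) (q1+1) q2 s - Bfun c F H (n+1) q1 (q2+1) s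
        - ((2*n+1-q1-q2 : ℕ) : ℂ) * Bfun c F H (n+1) q1 q2 s)) s := by
  set x := Real.sqrt (c+s) with hxdef
  have hx : 0 < x := sqrt_cs_pos hc hs
  have hu : (x : ℂ) ≠ 0 := by exact_mod_cast hx.ne'
  have hω := hasDerivAt_sqrt_cs hc hs
  have hF1 : HasDerivAt (iteratedDeriv q1 F) (iteratedDeriv (q1+1) F x) x := by
    rw [iteratedDeriv_succ]
    exact ((hF.differentiable_iteratedDeriv q1 (by exact_mod_cast ENat.coe_lt_top q1)) x).hasDerivAt
  have hH1 : HasDerivAt (iteratedDeriv q2 H) (iteratedDeriv (q2+1) H (-x)) (-x) := by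
    rw [iteratedDeriv_succ]
    exact ((hH.differentiable_iteratedDeriv q2 (by exact_mod_cast ENat.coe_lt_top q2)) (-x)).hasDerivAt
  have h1 : HasDerivAt (fun t => iteratedDeriv q1 F (Real.sqrt (c+t)))
      ((1/(2*x)) • iteratedDeriv (q1+1) F x) s := (hF1.scomp s hω :)
  have h2 : HasDerivAt (fun t => iteratedDeriv q2 H (-Real.sqrt (c+t)))
      ((-(1/(2*x))) • iteratedDeriv (q2+1) H (-x)) s := (hH1.scomp s hω.neg :)
  set K := 2*n+1-q1-q2 with hKdef
  obtain ⟨k0, hk0⟩ : ∃ k0, K = k0 + 1 := ⟨K - 1, by omega⟩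
  have h3 : HasDerivAt (fun t => ((Real.sqrt (c+t) : ℝ) : ℂ)^K)
      (((1/(2*x) : ℝ) : ℂ) * ((K : ℂ) * (x:ℂ)^(K-1))) s := by
    have h3' : HasDerivAt (fun t => ((Real.sqrt (c+t) : ℝ) : ℂ)) (((1/(2*x) : ℝ) : ℂ)) s :=
      hω.ofReal_comp
    have := HasDerivAt.scomp (𝕜 := ℝ) s (hasDerivAt_pow K ((x:ℝ) : ℂ)) h3'
    simpa [Function.comp_def, smul_eq_mul] using this
  have h4 := (h1.mul h2).div h3 (pow_ne_zero K hu)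
  have heq : (2*(n+1)+1-(q1+1)-q2) = K + 1 := by omega
  have heq2 : (2*(n+1)+1-q1-(q2+1)) = K + 1 := by omega
  have heq3 : (2*(n+1)+1-q1-q2) = K + 2 := by omega
  refine h4.congr_deriv (Eq.symm ?_)
  simp only [Bfun, ← hxdef, heq, heq2, heq3, ← hKdef, Pi.mul_apply]
  rw [hk0]
  simp only [Nat.add_sub_cancel, Complex.real_smul]
  push_cast
  have hxne : (x:ℂ) ≠ 0 := hu
  field_simp
  ring

lemma hasDerivAt_S (hc : 0 < c) (hF : ContDiff ℝ (⊤ : ℕ∞) F) (hH : ContDiff ℝ (⊤ : ℕ∞) H)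
    (n : ℕ) {s : ℝ} (hs : s ∈ Set.Ioi (-c)) :
    HasDerivAt (Sfun c F H n) (((n:ℂ)+1) * Sfun c F H (n+1) s) s := by
  have hsum : HasDerivAt (Sfun c F H n)
      (∑ q1 ∈ Finset.range (n+1), ∑ q2 ∈ Finset.range (n+1),
        ((ee n q1 q2 : ℝ) : ℂ) * (2⁻¹ * (Bfun c F H (n+1) (q1+1) q2 s
          - Bfun c F H (n+1) q1 (q2+1) s
          - ((2*n+1-q1-q2 : ℕ) : ℂ) * Bfun c F H (n+1) q1 q2 s))) s := by
    apply HasDerivAt.fun_sum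
    intro q1 _
    apply HasDerivAt.fun_sum
    intro q2 _
    by_cases h : q1 + q2 ≤ n
    · exact (hasDerivAt_B hc hF hH n q1 q2 h hs).const_mul _
    · have h0 : ee n q1 q2 = 0 := if_neg h
      simp only [h0, Complex.ofReal_zero, zero_mul]
      exact hasDerivAt_const s 0
  have := sum_rec n (fun a b => Bfun c F H (n+1) a b s)
  rw [this] at hsum
  exact hsum

end DMSF

namespace DMSF

noncomputable def Psi (c : ℝ) (F H : ℝ → ℂ) : ℝ → ℂ := fun s =>
  F (Real.sqrt (c + s)) * H (-Real.sqrt (c + s)) / (2 * (Real.sqrt (c + s) : ℂ))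

lemma contDiffOn_Psi (hc : 0 < c) (hF : ContDiff ℝ (⊤ : ℕ∞) F) (hH : ContDiff ℝ (⊤ : ℕ∞) H)
    (N : ℕ) : ContDiffOn ℝ N (Psi c F H) (Set.Ioi (-c)) := by
  intro s hs
  have hx : 0 < Real.sqrt (c+s) := sqrt_cs_pos hc hs
  have hcs : (0:ℝ) < c + s := by have := Real.sqrt_pos.1 hx; linarith
  have hsq : ContDiffAt ℝ N (fun t : ℝ => Real.sqrt (c+t)) s := by
    have h1 : ContDiffAt ℝ N (fun t : ℝ => c + t) s :=
      (contDiff_const.add contDiff_id).contDiffAt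
    exact (Real.contDiffAt_sqrt hcs.ne').comp s h1
  have hnum : ContDiffAt ℝ N
      (fun t : ℝ => F (Real.sqrt (c+t)) * H (-Real.sqrt (c+t))) s := by
    have hF' : ContDiffAt ℝ N (fun t : ℝ => F (Real.sqrt (c+t))) s :=
      ((hF.of_le (by exact_mod_cast (le_top : (N:ℕ∞) ≤ ⊤))).contDiffAt).comp s hsq
    have hH' : ContDiffAt ℝ N (fun t : ℝ => H (-Real.sqrt (c+t))) s :=
      ((hH.of_le (by exact_mod_cast (le_top : (N:ℕ∞) ≤ ⊤))).contDiffAt).comp s hsq.neg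
    exact hF'.mul hH'
  have hden : ContDiffAt ℝ N (fun t : ℝ => (2 : ℂ) * ((Real.sqrt (c+t) : ℝ) : ℂ)) s := by
    have : ContDiffAt ℝ N (fun t : ℝ => ((Real.sqrt (c+t) : ℝ) : ℂ)) s :=
      Complex.ofRealCLM.contDiff.contDiffAt.comp s hsq
    exact contDiffAt_const.mul this
  have hne : (2 : ℂ) * ((Real.sqrt (c+s) : ℝ) : ℂ) ≠ 0 := by
    have : ((Real.sqrt (c+s) : ℝ) : ℂ) ≠ 0 := by exact_mod_cast hx.ne'
    simp [this]
  have hinv : ContDiffAt ℝ N (fun t : ℝ => ((2 : ℂ) * ((Real.sqrt (c+t) : ℝ) : ℂ))⁻¹) s :=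
    hden.inv hne
  have : ContDiffAt ℝ N (Psi c F H) s := by
    have hmul := hnum.mul hinv
    unfold Psi
    simp only [div_eq_mul_inv]
    exact hmul
  exact this.contDiffWithinAt

lemma main_eq (hc : 0 < c) (hF : ContDiff ℝ (⊤ : ℕ∞) F) (hH : ContDiff ℝ (⊤ : ℕ∞) H) (n : ℕ) :
    ∀ s ∈ Set.Ioi (-c),
      iteratedDerivWithin n (Psi c F H) (Set.Ioi (-c)) s
        = (Nat.factorial n : ℂ) * Sfun c F H n s := by
  induction n with
  | zero =>
    intro s hs
    have hx : 0 < Real.sqrt (c+s) := sqrt_cs_pos hc hs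
    have hu : ((Real.sqrt (c+s) : ℝ) : ℂ) ≠ 0 := by exact_mod_cast hx.ne'
    rw [iteratedDerivWithin_zero]
    simp only [Sfun, Bfun, ee, Nat.factorial_zero, Nat.cast_one, one_mul]
    rw [Finset.sum_range_one, Finset.sum_range_one]
    norm_num [cnl, Psi]
    field_simp
  | succ n ih =>
    intro s hs
    rw [iteratedDerivWithin_succ]
    rw [derivWithin_of_isOpen isOpen_Ioi hs]
    have hev : iteratedDerivWithin n (Psi c F H) (Set.Ioi (-c))
        =ᶠ[nhds s] fun t => (Nat.factorial n : ℂ) * Sfun c F H n t :=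
      Filter.eventuallyEq_of_mem (isOpen_Ioi.mem_nhds hs) (fun t ht => ih t ht)
    rw [hev.deriv_eq]
    have hS := (hasDerivAt_S hc hF hH n hs).const_mul ((Nat.factorial n : ℂ))
    rw [hS.deriv]
    rw [Nat.factorial_succ]
    push_cast
    ring

end DMSF

namespace DMSF

lemma sum_conv (c : ℝ) (F H : ℝ → ℂ) (n : ℕ) (s : ℝ) :
    (∑ p ∈ (Finset.range (n + 1) ×ˢ Finset.range (n + 1)).filter
        (fun p => p.1 + p.2 ≤ n),
      ((cnl n (p.1 + p.2) * (-1 : ℝ) ^ p.1 * (Nat.choose (p.1 + p.2) p.2) : ℝ) : ℂ) *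
        iteratedDeriv p.1 F (Real.sqrt (c + s)) *
        iteratedDeriv p.2 H (-Real.sqrt (c + s)) /
        ((Real.sqrt (c + s) : ℂ)) ^ (2 * n + 1 - p.1 - p.2))
    = Sfun c F H n s := by
  rw [Finset.sum_filter, Finset.sum_product]
  unfold Sfun Bfun
  refine Finset.sum_congr rfl fun q1 _ => Finset.sum_congr rfl fun q2 _ => ?_
  by_cases h : q1 + q2 ≤ n
  · rw [if_pos h]
    simp only [ee, if_pos h]
    push_cast
    ring
  · rw [if_neg h]
    simp only [ee, if_neg h]
    simp

end DMSF


/-- for `c > 0`, smooth `F, H : ℝ → ℂ` and `Ψ(s) = F(ω)H(−ω)/(2ω)`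
with `ω = √(c+s)`, the function `Ψ` is `n` times differentiable on `(−c, ∞)` and
`(1/n!) Ψ⁽ⁿ⁾(s) = ∑_{l₁+l₂ ≤ n} c_{n,l₁+l₂} (−1)^{l₁} binom(l₁+l₂,l₂)
  F^{(l₁)}(ω) H^{(l₂)}(−ω) / ω^{2n+1−l₁−l₂}`. -/
theorem deriv_mass_squared_formula (c : ℝ) (hc : 0 < c) (F H : ℝ → ℂ)
    (hF : ContDiff ℝ (⊤ : ℕ∞) F) (hH : ContDiff ℝ (⊤ : ℕ∞) H) (n : ℕ) :
    ContDiffOn ℝ n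
      (fun s : ℝ =>
        F (Real.sqrt (c + s)) * H (-Real.sqrt (c + s)) /
          (2 * (Real.sqrt (c + s) : ℂ))) (Set.Ioi (-c)) ∧
    ∀ s ∈ Set.Ioi (-c),
      (1 / (Nat.factorial n) : ℂ) *
          iteratedDerivWithin n
            (fun s' : ℝ =>
              F (Real.sqrt (c + s')) * H (-Real.sqrt (c + s')) /
                (2 * (Real.sqrt (c + s') : ℂ))) (Set.Ioi (-c)) s =
        ∑ p ∈ (Finset.range (n + 1) ×ˢ Finset.range (n + 1)).filter
            (fun p => p.1 + p.2 ≤ n),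
          ((cnl n (p.1 + p.2) * (-1 : ℝ) ^ p.1 * (Nat.choose (p.1 + p.2) p.2) : ℝ) : ℂ) *
            iteratedDeriv p.1 F (Real.sqrt (c + s)) *
            iteratedDeriv p.2 H (-Real.sqrt (c + s)) /
            ((Real.sqrt (c + s) : ℂ)) ^ (2 * n + 1 - p.1 - p.2) := by
  constructor
  · exact DMSF.contDiffOn_Psi hc hF hH n
  · intro s hs
    have hfac : (Nat.factorial n : ℂ) ≠ 0 := by exact_mod_cast (Nat.factorial_pos n).ne'
    have hmain := DMSF.main_eq hc hF hH n s hs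
    rw [show (fun s' : ℝ => F (Real.sqrt (c + s')) * H (-Real.sqrt (c + s')) /
        (2 * (Real.sqrt (c + s') : ℂ))) = DMSF.Psi c F H from rfl]
    rw [hmain, DMSF.sum_conv c F H n s, one_div, inv_mul_cancel_left₀ hfac]
end

section
/- Let f and h be Schwartz functions on ℝ × ℝ³ with values in ℂ. For s > 0 define I(s) = ∫_{ℝ³} f(ω_k, k) · h(−ω_k, −k) / (2 ω_k) dk, where ω_k = √(‖k‖² + s). Then for every s > 0 the integral I(s) converges, I is differentiable at s, and I′(s) = ∫_{ℝ³} [ − f(ω_k, k) h(−ω_k, −k) / (4 ω_k³) + ( ∂₀f(ω_k, k) · h(−ω_k, −k) − f(ω_k, k) · ∂₀h(−ω_k, −k) ) / (4 ω_k²) ] dk, where ∂₀ denotes the partial derivative with respect to the first (time) variable. -/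
open MeasureTheory

/-- `ω_k = √(‖k‖² + s)`. -/
noncomputable def omg (s : ℝ) (k : EuclideanSpace ℝ (Fin 3)) : ℝ :=
  Real.sqrt (‖k‖ ^ 2 + s)

/-!
Differentiate under the integral sign. With `ω = ω_s(k)`, the integrand is `G(ω)` for
`G(x) = f(x,k) h(-x,-k) / (2x)`, and `dω/ds = 1/(2ω)` turns `G'(ω)/(2ω)` into the stated integrand.
For `s ≥ a > 0` we have `ω ≥ √a`, so both the integrand and its `s`-derivative are bounded by
`C (1 + ‖k‖)⁻⁴`, which is integrable on `ℝ³`: `f`, `h` and their time derivatives are Schwartz,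
so each product `f(ω,k) h(-ω,-k)` decays like any power of `‖k‖`, uniformly in `ω`.
-/

open scoped SchwartzMap LineDeriv

theorem integrable_inv_one_add_norm_pow {E : Type*} [NormedAddCommGroup E] [NormedSpace ℝ E]
    [FiniteDimensional ℝ E] [MeasurableSpace E] [BorelSpace E] {μ : Measure E}
    [μ.IsAddHaarMeasure] {n : ℕ} (hn : Module.finrank ℝ E < n) :
    Integrable (fun x : E ↦ ((1 + ‖x‖) ^ n)⁻¹) μ := by
  refine (integrable_one_add_norm (μ := μ) (r := n) (by exact_mod_cast hn)).congr
    (ae_of_all _ fun x ↦ ?_)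
  simp only [Real.rpow_neg (by positivity : (0 : ℝ) ≤ 1 + ‖x‖), Real.rpow_natCast]

namespace SchwartzMap

variable {D E F V : Type*} [NormedAddCommGroup D] [NormedSpace ℝ D]
  [NormedAddCommGroup E] [NormedSpace ℝ E] [NormedAddCommGroup F] [NormedSpace ℝ F]

theorem exists_norm_le_mul_inv_one_add_norm_snd_pow [NormedAddCommGroup V] [NormedSpace ℝ V]
    (g : 𝓢(E × F, V)) (n : ℕ) :
    ∃ C, ∀ p : E × F, ‖g p‖ ≤ C * ((1 + ‖p.2‖) ^ n)⁻¹ := by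
  refine ⟨2 ^ n * (Finset.Iic (n, 0)).sup (fun m ↦ SchwartzMap.seminorm ℝ m.1 m.2) g,
    fun p ↦ ?_⟩
  have hdecay := one_add_le_sup_seminorm_apply (𝕜 := ℝ) (m := (n, 0)) le_rfl le_rfl g p
  rw [norm_iteratedFDeriv_zero] at hdecay
  rw [← div_eq_mul_inv, le_div_iff₀' (by positivity)]
  refine le_trans ?_ hdecay
  gcongr
  exact norm_snd_le p

theorem exists_norm_mul_le_mul_inv_one_add_norm_snd_pow [NonUnitalNormedRing V]
    [NormedSpace ℝ V] (g₁ : 𝓢(E × F, V)) (g₂ : 𝓢(D, V)) (n : ℕ) :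
    ∃ C, ∀ (p : E × F) (y : D), ‖g₁ p * g₂ y‖ ≤ C * ((1 + ‖p.2‖) ^ n)⁻¹ := by
  obtain ⟨C, hC⟩ := g₁.exists_norm_le_mul_inv_one_add_norm_snd_pow n
  refine ⟨C * SchwartzMap.seminorm ℝ 0 0 g₂, fun p y ↦ ?_⟩
  calc ‖g₁ p * g₂ y‖ ≤ ‖g₁ p‖ * ‖g₂ y‖ := norm_mul_le _ _
    _ ≤ C * ((1 + ‖p.2‖) ^ n)⁻¹ * SchwartzMap.seminorm ℝ 0 0 g₂ :=
      mul_le_mul (hC p) (norm_le_seminorm ℝ g₂ y) (norm_nonneg _) ((norm_nonneg _).trans (hC p))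
    _ = _ := by ring

theorem hasDerivAt_apply_prodMk [NormedAddCommGroup V] [NormedSpace ℝ V] (g : 𝓢(ℝ × F, V))
    (x : ℝ) (k : F) : HasDerivAt (fun x ↦ g (x, k)) (∂_{((1 : ℝ), (0 : F))} g (x, k)) x :=
  (g.hasFDerivAt (x, k)).comp_hasDerivAt x ((hasDerivAt_id x).prodMk (hasDerivAt_const x k))

theorem deriv_apply_prodMk [NormedAddCommGroup V] [NormedSpace ℝ V] (g : 𝓢(ℝ × F, V))
    (x : ℝ) (k : F) : deriv (fun x ↦ g (x, k)) x = ∂_{((1 : ℝ), (0 : F))} g (x, k) :=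
  (g.hasDerivAt_apply_prodMk x k).deriv

end SchwartzMap

local notation "ℝ³" => EuclideanSpace ℝ (Fin 3)

section Omega

variable {s : ℝ}

theorem omg_pos (hs : 0 < s) (k : ℝ³) : 0 < omg s k :=
  Real.sqrt_pos.2 (by positivity)

theorem sqrt_le_omg (s : ℝ) (k : ℝ³) : √s ≤ omg s k :=
  Real.sqrt_le_sqrt (le_add_of_nonneg_left (by positivity))

@[fun_prop]
theorem continuous_omg (s : ℝ) : Continuous (omg s) := by
  unfold omg; fun_prop

theorem hasDerivAt_omg (hs : 0 < s) (k : ℝ³) :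
    HasDerivAt (fun t ↦ omg t k) (1 / (2 * omg s k)) s := by
  simpa [omg, mul_comm] using ((hasDerivAt_id s).const_add (‖k‖ ^ 2)).sqrt (by positivity)

theorem norm_ofReal_omg (s : ℝ) (k : ℝ³) : ‖(omg s k : ℂ)‖ = omg s k :=
  Complex.norm_of_nonneg (Real.sqrt_nonneg _)

end Omega

section TwoPointIntegrand

variable (f h : 𝓢(ℝ × ℝ³, ℂ))

noncomputable def twoPointIntegrand (s : ℝ) (k : ℝ³) : ℂ :=
  f (omg s k, k) * h (-omg s k, -k) / (2 * (omg s k : ℂ))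

/-- `∂_{(1, 0)}` is the time derivative `∂₀`; unlike the `deriv` of the statement it is again a
Schwartz map (`SchwartzMap.deriv_apply_prodMk` relates the two). -/
noncomputable def twoPointIntegrandDeriv (s : ℝ) (k : ℝ³) : ℂ :=
  -(f (omg s k, k) * h (-omg s k, -k)) / (4 * (omg s k : ℂ) ^ 3) +
    (∂_{((1 : ℝ), (0 : ℝ³))} f (omg s k, k) * h (-omg s k, -k) -
      f (omg s k, k) * ∂_{((1 : ℝ), (0 : ℝ³))} h (-omg s k, -k)) / (4 * (omg s k : ℂ) ^ 2)

variable {s : ℝ}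

theorem hasDerivAt_twoPointIntegrand (hs : 0 < s) (k : ℝ³) :
    HasDerivAt (twoPointIntegrand f h · k) (twoPointIntegrandDeriv f h s k) s := by
  have hω := hasDerivAt_omg hs k
  have hωC : (omg s k : ℂ) ≠ 0 := Complex.ofReal_ne_zero.2 (omg_pos hs k).ne'
  have hf := (f.hasDerivAt_apply_prodMk (omg s k) k).scomp s hω
  have hh := (h.hasDerivAt_apply_prodMk (-omg s k) (-k)).scomp s hω.neg
  have hden := hω.ofReal_comp.const_mul (2 : ℂ)
  refine ((hf.mul hh).div hden (by simpa using hωC)).congr_deriv ?_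
  simp only [twoPointIntegrandDeriv, Function.comp_apply, Pi.mul_apply, Pi.neg_apply,
    Complex.real_smul]
  push_cast
  field_simp
  ring

theorem continuous_twoPointIntegrand (hs : 0 < s) : Continuous (twoPointIntegrand f h s) := by
  have := fun k ↦ (omg_pos hs k).ne'
  unfold twoPointIntegrand; fun_prop (disch := simpa)

theorem continuous_twoPointIntegrandDeriv (hs : 0 < s) :
    Continuous (twoPointIntegrandDeriv f h s) := by
  have := fun k ↦ (omg_pos hs k).ne'
  unfold twoPointIntegrandDeriv; fun_prop (disch := simpa)

theorem integrable_twoPointIntegrand (hs : 0 < s) : Integrable (twoPointIntegrand f h s) := by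
  obtain ⟨C, hC⟩ := f.exists_norm_mul_le_mul_inv_one_add_norm_snd_pow h 4
  refine ((integrable_inv_one_add_norm_pow (n := 4) (by simp)).const_mul (C / (2 * √s))).mono'
    (continuous_twoPointIntegrand f h hs).aestronglyMeasurable (ae_of_all _ fun k ↦ ?_)
  have hω := sqrt_le_omg s k
  have hs' : 0 < √s := Real.sqrt_pos.2 hs
  rw [twoPointIntegrand, norm_div, norm_mul (2 : ℂ), Complex.norm_ofNat, norm_ofReal_omg]
  calc _ ≤ ‖f (omg s k, k) * h (-omg s k, -k)‖ / (2 * √s) := by gcongr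
    _ ≤ C * ((1 + ‖k‖) ^ 4)⁻¹ / (2 * √s) := by gcongr; exact hC (omg s k, k) _
    _ = _ := by ring

theorem exists_norm_twoPointIntegrandDeriv_le {a : ℝ} (ha : 0 < a) :
    ∃ C, ∀ t, a ≤ t → ∀ k : ℝ³,
      ‖twoPointIntegrandDeriv f h t k‖ ≤ C * ((1 + ‖k‖) ^ 4)⁻¹ := by
  obtain ⟨C₀, hC₀⟩ := f.exists_norm_mul_le_mul_inv_one_add_norm_snd_pow h 4
  obtain ⟨C₁, hC₁⟩ :=
    (∂_{((1 : ℝ), (0 : ℝ³))} f).exists_norm_mul_le_mul_inv_one_add_norm_snd_pow h 4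
  obtain ⟨C₂, hC₂⟩ :=
    f.exists_norm_mul_le_mul_inv_one_add_norm_snd_pow (∂_{((1 : ℝ), (0 : ℝ³))} h) 4
  refine ⟨C₀ / (4 * √a ^ 3) + (C₁ + C₂) / (4 * √a ^ 2), fun t hat k ↦ ?_⟩
  have hω : √a ≤ omg t k := (Real.sqrt_le_sqrt hat).trans (sqrt_le_omg t k)
  have ha' : 0 < √a := Real.sqrt_pos.2 ha
  rw [twoPointIntegrandDeriv]
  set p : ℝ × ℝ³ := (omg t k, k)
  set q : ℝ × ℝ³ := (-omg t k, -k)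
  calc _ ≤ ‖f p * h q‖ / (4 * omg t k ^ 3) +
          (‖∂_{((1 : ℝ), (0 : ℝ³))} f p * h q‖ + ‖f p * ∂_{((1 : ℝ), (0 : ℝ³))} h q‖) /
            (4 * omg t k ^ 2) := by
        grw [norm_add_le, norm_div, norm_div, norm_neg, norm_sub_le]
        simp only [norm_mul (4 : ℂ), norm_pow, Complex.norm_ofNat, norm_ofReal_omg, le_refl]
    _ ≤ ‖f p * h q‖ / (4 * √a ^ 3) +
          (‖∂_{((1 : ℝ), (0 : ℝ³))} f p * h q‖ + ‖f p * ∂_{((1 : ℝ), (0 : ℝ³))} h q‖) /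
            (4 * √a ^ 2) := by gcongr
    _ ≤ C₀ * ((1 + ‖k‖) ^ 4)⁻¹ / (4 * √a ^ 3) +
          (C₁ * ((1 + ‖k‖) ^ 4)⁻¹ + C₂ * ((1 + ‖k‖) ^ 4)⁻¹) / (4 * √a ^ 2) := by
        gcongr ?_ / _ + (?_ + ?_) / _
        exacts [hC₀ p q, hC₁ p q, hC₂ p q]
    _ = _ := by ring

end TwoPointIntegrand

/-- for Schwartz functions `f, h` on `ℝ × ℝ³` and `s > 0`, the
integral `I(s) = ∫ f(ω_k,k) h(−ω_k,−k)/(2ω_k) dk` (with `ω_k = √(‖k‖²+s)`)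
converges, the integrand of its derivative is integrable, and `I` has at `s` the
derivative
`∫ [ −f(ω_k,k)h(−ω_k,−k)/(4ω_k³)
   + (∂₀f(ω_k,k) h(−ω_k,−k) − f(ω_k,k) ∂₀h(−ω_k,−k))/(4ω_k²) ] dk`. -/
theorem hasDerivAt_two_point_integral
    (f h : SchwartzMap (ℝ × EuclideanSpace ℝ (Fin 3)) ℂ) (s : ℝ) (hs : 0 < s) :
    Integrable (fun k : EuclideanSpace ℝ (Fin 3) =>
      f (omg s k, k) * h (-omg s k, -k) / (2 * (omg s k : ℂ))) ∧
    Integrable (fun k : EuclideanSpace ℝ (Fin 3) =>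
      -(f (omg s k, k) * h (-omg s k, -k)) / (4 * (omg s k : ℂ) ^ 3) +
        (deriv (fun x : ℝ => f (x, k)) (omg s k) * h (-omg s k, -k) -
          f (omg s k, k) * deriv (fun x : ℝ => h (x, -k)) (-omg s k)) /
          (4 * (omg s k : ℂ) ^ 2)) ∧
    HasDerivAt
      (fun s' : ℝ => ∫ k : EuclideanSpace ℝ (Fin 3),
        f (omg s' k, k) * h (-omg s' k, -k) / (2 * (omg s' k : ℂ)))
      (∫ k : EuclideanSpace ℝ (Fin 3),
        (-(f (omg s k, k) * h (-omg s k, -k)) / (4 * (omg s k : ℂ) ^ 3) +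
          (deriv (fun x : ℝ => f (x, k)) (omg s k) * h (-omg s k, -k) -
            f (omg s k, k) * deriv (fun x : ℝ => h (x, -k)) (-omg s k)) /
            (4 * (omg s k : ℂ) ^ 2))) s := by
  have hs₂ : 0 < s / 2 := half_pos hs
  obtain ⟨C, hC⟩ := exists_norm_twoPointIntegrandDeriv_le f h hs₂
  obtain ⟨hF'_int, hF'⟩ := hasDerivAt_integral_of_dominated_loc_of_deriv_le
    (F := twoPointIntegrand f h) (F' := twoPointIntegrandDeriv f h)
    (Ioi_mem_nhds (half_lt_self hs))
    ((eventually_gt_nhds hs).mono fun t ht ↦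
      (continuous_twoPointIntegrand f h ht).aestronglyMeasurable)
    (integrable_twoPointIntegrand f h hs)
    (continuous_twoPointIntegrandDeriv f h hs).aestronglyMeasurable
    (ae_of_all _ fun k t ht ↦ hC t ht.le k)
    ((integrable_inv_one_add_norm_pow (n := 4) (by simp)).const_mul C)
    (ae_of_all _ fun k t ht ↦ hasDerivAt_twoPointIntegrand f h (hs₂.trans ht) k)
  simp only [SchwartzMap.deriv_apply_prodMk]
  exact ⟨integrable_twoPointIntegrand f h hs, hF'_int, hF'⟩
end
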